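/- Let Q be a complete sequence, let 1 ≤ i < N, and let Q* be the complete sequence obtained from Q by swapping the queries at positions i and i+1. Then D_Q(i) + D_Q(i+1) = D_{Q*}(i) + D_{Q*}(i+1). -/

import Mathlib

/-- The set of scenes: subsets of `Fin n` with at least `k` elements. -/
def scenes (n k : ℕ) : Finset (Finset (Fin n)) :=
  Finset.univ.filter fun s => k ≤ s.card

/-- A complete sequence: a list of queries containing every `k`-element
subset of `Fin n` exactly once. -/
def CompleteSeq (n k : ℕ) (Q : List (Finset (Fin n))) : Prop :=
  Q.Nodup ∧ ∀ q : Finset (Fin n), q ∈ Q ↔ q.card = k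

/-- `tau n Q s` is the least (1-based) index `i` such that `q_i ⊆ s`. -/
def tau (n : ℕ) (Q : List (Finset (Fin n))) (s : Finset (Fin n)) : ℕ :=
  Q.findIdx (fun q => decide (q ⊆ s)) + 1

/-- The expected time to discovery `T(Q) = (1/|S|) Σ_{s∈S} τ(Q,s)`. -/
def T (n k : ℕ) (Q : List (Finset (Fin n))) : ℚ :=
  ((scenes n k).card : ℚ)⁻¹ * ∑ s ∈ scenes n k, (tau n Q s : ℚ)

/-- `D n k Q i`: the number of scenes discovered by the query at (1-based)
position `i` of `Q` but not by any earlier query. -/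
def D (n k : ℕ) (Q : List (Finset (Fin n))) (i : ℕ) : ℕ :=
  ((scenes n k).filter fun s =>
    Q.getD (i - 1) ∅ ⊆ s ∧ ∀ j < i - 1, ¬ Q.getD j ∅ ⊆ s).card

/-- The list obtained from `Q` by swapping the queries at (1-based)
positions `i` and `i+1`. -/
def swapAdj (n : ℕ) (Q : List (Finset (Fin n))) (i : ℕ) : List (Finset (Fin n)) :=
  (Q.set (i - 1) (Q.getD i ∅)).set i (Q.getD (i - 1) ∅)

/-! The scenes first discovered at positions `i` or `i + 1` are exactly those found by
`q_i` or `q_{i+1}` but by no `q_j` with `j < i`. This description is symmetric in the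
two queries and does not change when they are swapped. -/

theorem CompleteSeq.length_eq {n k : ℕ} {Q : List (Finset (Fin n))} (hQ : CompleteSeq n k Q) :
    Q.length = n.choose k := by
  have hQ_toFinset : Q.toFinset = Finset.univ.powersetCard k := by
    ext q
    simp [hQ.2]
  rw [← List.toFinset_card_of_nodup hQ.1, hQ_toFinset, Finset.card_powersetCard,
    Finset.card_univ, Fintype.card_fin]

theorem D_add_D_succ (n k : ℕ) (Q : List (Finset (Fin n))) (m : ℕ) :
    D n k Q (m + 1) + D n k Q (m + 1 + 1) =
      ((scenes n k).filter fun s =>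
        (Q.getD m ∅ ⊆ s ∨ Q.getD (m + 1) ∅ ⊆ s) ∧ ∀ j < m, ¬ Q.getD j ∅ ⊆ s).card := by
  have hdisj : Disjoint
      ((scenes n k).filter fun s => Q.getD m ∅ ⊆ s ∧ ∀ j < m, ¬ Q.getD j ∅ ⊆ s)
      ((scenes n k).filter fun s => Q.getD (m + 1) ∅ ⊆ s ∧ ∀ j < m + 1, ¬ Q.getD j ∅ ⊆ s) :=
    Finset.disjoint_filter.2 fun s _ h₁ h₂ => h₂.2 m m.lt_succ_self h₁.1
  simp only [D, Nat.add_sub_cancel]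
  rw [← Finset.card_union_of_disjoint hdisj, ← Finset.filter_or]
  refine congrArg Finset.card (Finset.filter_congr fun s _ => ?_)
  simp only [Nat.forall_lt_succ_right]
  tauto

section swapAdj

variable {n : ℕ} {Q : List (Finset (Fin n))} {m : ℕ}

theorem getD_swapAdj_left (hm : m + 1 < Q.length) :
    (swapAdj n Q (m + 1)).getD m ∅ = Q.getD (m + 1) ∅ := by
  simp [swapAdj, List.getD_eq_getElem?_getD, hm, Nat.lt_of_succ_lt hm]

theorem getD_swapAdj_right (hm : m + 1 < Q.length) :
    (swapAdj n Q (m + 1)).getD (m + 1) ∅ = Q.getD m ∅ := by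
  simp [swapAdj, List.getD_eq_getElem?_getD, hm]

theorem getD_swapAdj_of_lt {j : ℕ} (hj : j < m) :
    (swapAdj n Q (m + 1)).getD j ∅ = Q.getD j ∅ := by
  simp [swapAdj, List.getD_eq_getElem?_getD, hj.ne', (hj.trans m.lt_succ_self).ne']

end swapAdj

theorem D_add_D_swap_general (n k : ℕ)
    (Q : List (Finset (Fin n))) (hQ : CompleteSeq n k Q)
    (i : ℕ) (hi1 : 1 ≤ i) (hiN : i < Nat.choose n k) :
    D n k Q i + D n k Q (i + 1)
      = D n k (swapAdj n Q i) i + D n k (swapAdj n Q i) (i + 1) := by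
  obtain ⟨m, rfl⟩ : ∃ m, i = m + 1 := ⟨i - 1, by omega⟩
  have hm : m + 1 < Q.length := hQ.length_eq ▸ hiN
  rw [D_add_D_succ, D_add_D_succ]
  refine congrArg Finset.card (Finset.filter_congr fun s _ => ?_)
  rw [getD_swapAdj_left hm, getD_swapAdj_right hm, or_comm]
  exact and_congr_right fun _ => forall₂_congr fun j hj => by rw [getD_swapAdj_of_lt hj]

/-- Swapping adjacent queries preserves the total number of scenes they
discover: `D_Q(i) + D_Q(i+1) = D_{Q*}(i) + D_{Q*}(i+1)`. -/
theorem D_add_D_swap (n k : ℕ) (hk1 : 1 ≤ k) (hkn : k ≤ n)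
    (Q : List (Finset (Fin n))) (hQ : CompleteSeq n k Q)
    (i : ℕ) (hi1 : 1 ≤ i) (hiN : i < Nat.choose n k) :
    D n k Q i + D n k Q (i + 1)
      = D n k (swapAdj n Q i) i + D n k (swapAdj n Q i) (i + 1) :=
  D_add_D_swap_general n k Q hQ i hi1 hiN
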